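/- Let κ₁, κ₂ > −1/2 and κ₃ > −1. The map ψ(u,v) = (u, 𝔱(u,v)) is a bijection from Λ_{a,b,c} onto B²₊, with inverse ψ⁻¹(s,t) = (s, sqrt((b−a)t² + a(1−s²) + c s²)). Moreover, for every measurable f on Λ_{a,b,c} such that f·W^κ_{a,b,c} is integrable, ∫_{Λ_{a,b,c}} f(u,v) W^κ_{a,b,c}(u,v) du dv = (b−a) ∫_{B²₊} f(ψ⁻¹(s,t)) W_B^κ(s,t) ds dt. -/

import Mathlib

open MeasureTheory

noncomputable section

/-- The upper half `Λ_{a,b,c}` of the fully symmetric domain `Ω_{a,b,c}`. -/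
def LamSet (a b c : ℝ) : Set (ℝ × ℝ) :=
  {p | a + (c - a) * p.1 ^ 2 ≤ p.2 ^ 2 ∧ p.2 ^ 2 ≤ b + (c - b) * p.1 ^ 2 ∧
       |p.1| ≤ 1 ∧ 0 ≤ p.2}

/-- The closed upper half-disk `B²₊`. -/
def Bplus : Set (ℝ × ℝ) := {p | p.1 ^ 2 + p.2 ^ 2 ≤ 1 ∧ 0 ≤ p.2}

/-- The function `𝔱(u,v) = sqrt((−a+(a−c)u²+v²)/(b−a))`. -/
def frakt (a b c : ℝ) (p : ℝ × ℝ) : ℝ :=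
  Real.sqrt ((-a + (a - c) * p.1 ^ 2 + p.2 ^ 2) / (b - a))

/-- The map `ψ(u,v) = (u, 𝔱(u,v))`. -/
def psiMap (a b c : ℝ) (p : ℝ × ℝ) : ℝ × ℝ := (p.1, frakt a b c p)

/-- The inverse map `ψ⁻¹(s,t) = (s, sqrt((b−a)t² + a(1−s²) + cs²))`. -/
def psiInvMap (a b c : ℝ) (p : ℝ × ℝ) : ℝ × ℝ :=
  (p.1, Real.sqrt ((b - a) * p.2 ^ 2 + a * (1 - p.1 ^ 2) + c * p.1 ^ 2))

/-- The weight `W^κ_{a,b,c}` on `Λ_{a,b,c}`. -/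
def Wabc (a b c κ1 κ2 κ3 : ℝ) (p : ℝ × ℝ) : ℝ :=
  |p.2| * |p.1| ^ (2 * κ1) *
    ((-a + (a - c) * p.1 ^ 2 + p.2 ^ 2) / (b - a)) ^ (κ2 - 1 / 2) *
    ((b - (b - c) * p.1 ^ 2 - p.2 ^ 2) / (b - a)) ^ κ3

/-- The weight `W_B^κ(s,t) = |s|^{2κ₁} |t|^{2κ₂} (1−s²−t²)^{κ₃}` on the disk. -/
def WBdisk (κ1 κ2 κ3 : ℝ) (p : ℝ × ℝ) : ℝ :=
  |p.1| ^ (2 * κ1) * |p.2| ^ (2 * κ2) * (1 - p.1 ^ 2 - p.2 ^ 2) ^ κ3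

/-!
`ψ` only changes the second coordinate: on the vertical line through `s` it is the increasing
substitution `v² = a + (c - a) s² + (b - a) t²`, which carries the segment
`a + (c - a) s² ≤ v² ≤ b + (c - b) s²`, `v ≥ 0` onto `0 ≤ t ≤ √(1 - s²)`. Hence the Jacobian of
`ψ⁻¹` is the triangular determinant `∂v/∂t = (b - a) t / v`. It cancels the factor `|v|` of
`W^κ_{a,b,c}` and turns `(t²)^(κ₂ - 1/2)` into `t^(2κ₂)`, which leaves `(b - a) W_B^κ`.
The change of variables is applied between the interiors, where `ψ⁻¹` is smooth; the boundaries
are unions of graphs of functions of `u`, hence null.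
-/

open Set

theorem volume_graph_eq_zero {g : ℝ → ℝ} (hg : Measurable g) :
    volume {p : ℝ × ℝ | p.2 = g p.1} = 0 := by
  rw [Measure.volume_eq_prod, Measure.prod_apply (measurableSet_graph hg)]
  have hslice : ∀ x : ℝ, Prod.mk x ⁻¹' {p : ℝ × ℝ | p.2 = g p.1} = {g x} := fun x => by
    ext y; simp
  simp [hslice]

theorem det_fst_prod_smul_fst_add_smul_snd (α β : ℝ) :
    ((ContinuousLinearMap.fst ℝ ℝ ℝ).prod
      (α • ContinuousLinearMap.fst ℝ ℝ ℝ + β • ContinuousLinearMap.snd ℝ ℝ ℝ)).det = β := by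
  have h := Matrix.toLin_finTwoProd_toContinuousLinearMap (1 : ℝ) 0 α β
  rw [one_smul, zero_smul, add_zero] at h
  rw [← h, LinearMap.det_toContinuousLinearMap, LinearMap.det_toLin, Matrix.det_fin_two_of]
  ring

theorem self_mul_sq_rpow_sub_half {t : ℝ} (ht : 0 < t) (κ : ℝ) :
    t * (t ^ 2) ^ (κ - 1 / 2) = t ^ (2 * κ) := by
  rw [← Real.rpow_natCast, ← Real.rpow_mul ht.le, mul_comm t, ← Real.rpow_add_one ht.ne']
  congr 1
  push_cast
  ring

-- `openLamSet 0 1 0` is the open upper half-disk.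
def openLamSet (a b c : ℝ) : Set (ℝ × ℝ) :=
  {p | a + (c - a) * p.1 ^ 2 < p.2 ^ 2 ∧ p.2 ^ 2 < b + (c - b) * p.1 ^ 2 ∧ 0 < p.2}

def psiInvSq (a b c : ℝ) (p : ℝ × ℝ) : ℝ :=
  (b - a) * p.2 ^ 2 + a * (1 - p.1 ^ 2) + c * p.1 ^ 2

def psiInvFDeriv (a b c : ℝ) (p : ℝ × ℝ) : ℝ × ℝ →L[ℝ] ℝ × ℝ :=
  (ContinuousLinearMap.fst ℝ ℝ ℝ).prod
    (((c - a) * p.1 / √(psiInvSq a b c p)) • ContinuousLinearMap.fst ℝ ℝ ℝ +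
      ((b - a) * p.2 / √(psiInvSq a b c p)) • ContinuousLinearMap.snd ℝ ℝ ℝ)

section

variable {a b c : ℝ} {p : ℝ × ℝ}

lemma isOpen_openLamSet (a b c : ℝ) : IsOpen (openLamSet a b c) := by
  simp only [openLamSet, ofPred_and]
  refine (isOpen_lt ?_ ?_).inter ((isOpen_lt ?_ ?_).inter (isOpen_lt ?_ ?_)) <;> fun_prop

lemma openLamSet_subset_lamSet (hab : a < b) : openLamSet a b c ⊆ LamSet a b c := by
  rintro ⟨u, v⟩ ⟨h₁, h₂, h₃⟩
  refine ⟨h₁.le, h₂.le, (sq_le_one_iff_abs_le_one _).1 (by nlinarith), h₃.le⟩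

lemma lamSet_ae_eq_openLamSet (hab : a < b) : LamSet a b c =ᵐ[volume] openLamSet a b c := by
  have hboundary : LamSet a b c \ openLamSet a b c ⊆
      {p | p.2 = √(a + (c - a) * p.1 ^ 2)} ∪ {p | p.2 = √(b + (c - b) * p.1 ^ 2)} ∪
        {p | p.2 = 0} := by
    rintro ⟨u, v⟩ ⟨⟨h₁, h₂, -, h₄⟩, hopen⟩
    simp only [mem_union, mem_ofPred_eq]
    rcases h₁.eq_or_lt with h₁ | h₁
    · exact .inl (.inl (by rw [h₁, Real.sqrt_sq h₄]))
    rcases h₂.eq_or_lt with h₂ | h₂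
    · exact .inl (.inr (by rw [← h₂, Real.sqrt_sq h₄]))
    exact .inr (h₄.eq_or_lt.resolve_right fun h₃ => hopen ⟨h₁, h₂, h₃⟩).symm
  refine ae_eq_set.2 ⟨measure_mono_null hboundary ?_, by
    rw [sdiff_eq_empty.2 (openLamSet_subset_lamSet hab), measure_empty]⟩
  refine measure_union_null (measure_union_null ?_ ?_) (volume_graph_eq_zero measurable_const)
  · exact volume_graph_eq_zero (g := fun u => √(a + (c - a) * u ^ 2)) (by fun_prop)
  · exact volume_graph_eq_zero (g := fun u => √(b + (c - b) * u ^ 2)) (by fun_prop)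

lemma bplus_eq_lamSet : Bplus = LamSet 0 1 0 := by
  ext ⟨s, t⟩
  simp only [Bplus, LamSet, mem_ofPred_eq, ← sq_le_one_iff_abs_le_one]
  constructor
  · rintro ⟨h₁, h₂⟩
    exact ⟨by nlinarith, by linarith, by nlinarith, h₂⟩
  · rintro ⟨-, h₂, -, h₄⟩
    exact ⟨by linarith, h₄⟩

lemma psiInvSq_nonneg (ha : 0 ≤ a) (hab : a < b) (hc : 0 ≤ c) (hp : p ∈ Bplus) :
    0 ≤ psiInvSq a b c p := by
  obtain ⟨h₁, -⟩ := hp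
  have : p.1 ^ 2 ≤ 1 := by nlinarith
  unfold psiInvSq
  nlinarith [mul_nonneg (sub_pos.2 hab).le (sq_nonneg p.2), mul_nonneg hc (sq_nonneg p.1)]

lemma psiInvSq_pos (ha : 0 ≤ a) (hab : a < b) (hc : 0 ≤ c) (hp : p ∈ openLamSet 0 1 0) :
    0 < psiInvSq a b c p := by
  obtain ⟨-, h₂, h₃⟩ := hp
  unfold psiInvSq
  nlinarith [mul_pos (sub_pos.2 hab) (pow_pos h₃ 2), mul_nonneg hc (sq_nonneg p.1)]

lemma psiInvMap_eq : psiInvMap a b c p = (p.1, √(psiInvSq a b c p)) := rfl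

lemma sq_psiInvMap_snd (h : 0 ≤ psiInvSq a b c p) : (psiInvMap a b c p).2 ^ 2 = psiInvSq a b c p :=
  Real.sq_sqrt h

lemma lowerRatio_psiInvSq (hab : a < b) :
    (-a + (a - c) * p.1 ^ 2 + psiInvSq a b c p) / (b - a) = p.2 ^ 2 := by
  rw [div_eq_iff (sub_pos.2 hab).ne', psiInvSq]
  ring

lemma upperRatio_psiInvSq (hab : a < b) :
    (b - (b - c) * p.1 ^ 2 - psiInvSq a b c p) / (b - a) = 1 - p.1 ^ 2 - p.2 ^ 2 := by
  rw [div_eq_iff (sub_pos.2 hab).ne', psiInvSq]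
  ring

lemma psiInvSq_psiMap (hab : a < b) (h : 0 ≤ (-a + (a - c) * p.1 ^ 2 + p.2 ^ 2) / (b - a)) :
    psiInvSq a b c (psiMap a b c p) = p.2 ^ 2 := by
  rw [psiInvSq, psiMap, frakt, Real.sq_sqrt h, mul_div_cancel₀ _ (sub_pos.2 hab).ne']
  ring

lemma psiInvMap_psiMap (hab : a < b) (hp : p ∈ LamSet a b c) :
    psiInvMap a b c (psiMap a b c p) = p := by
  obtain ⟨h₁, -, -, h₄⟩ := hp
  have h : 0 ≤ (-a + (a - c) * p.1 ^ 2 + p.2 ^ 2) / (b - a) :=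
    div_nonneg (by linarith) (sub_pos.2 hab).le
  change (p.1, √(psiInvSq a b c (psiMap a b c p))) = p
  rw [psiInvSq_psiMap hab h, Real.sqrt_sq h₄]

lemma psiMap_psiInvMap (ha : 0 ≤ a) (hab : a < b) (hc : 0 ≤ c) (hp : p ∈ Bplus) :
    psiMap a b c (psiInvMap a b c p) = p := by
  change (p.1, √((-a + (a - c) * p.1 ^ 2 + (psiInvMap a b c p).2 ^ 2) / (b - a))) = p
  rw [sq_psiInvMap_snd (psiInvSq_nonneg ha hab hc hp), lowerRatio_psiInvSq hab,
    Real.sqrt_sq hp.2]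

lemma mapsTo_psiMap (hab : a < b) : MapsTo (psiMap a b c) (LamSet a b c) Bplus := by
  rintro ⟨u, v⟩ ⟨h₁, h₂, -, -⟩
  have hT : 0 ≤ (-a + (a - c) * u ^ 2 + v ^ 2) / (b - a) :=
    div_nonneg (by linarith) (sub_pos.2 hab).le
  have hT' : (-a + (a - c) * u ^ 2 + v ^ 2) / (b - a) ≤ 1 - u ^ 2 := by
    rw [div_le_iff₀ (sub_pos.2 hab)]; linarith
  refine ⟨?_, Real.sqrt_nonneg _⟩
  change u ^ 2 + √_ ^ 2 ≤ 1
  rw [Real.sq_sqrt hT]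
  linarith

lemma mapsTo_psiInvMap (ha : 0 ≤ a) (hab : a < b) (hc : 0 ≤ c) :
    MapsTo (psiInvMap a b c) Bplus (LamSet a b c) := by
  intro p hp
  have hsq := sq_psiInvMap_snd (psiInvSq_nonneg ha hab hc hp)
  obtain ⟨h₁, h₂⟩ := hp
  refine ⟨?_, ?_, (sq_le_one_iff_abs_le_one p.1).1 (by nlinarith), Real.sqrt_nonneg _⟩ <;>
  · rw [hsq]
    dsimp only [psiInvMap, psiInvSq]
    nlinarith [mul_nonneg (sub_pos.2 hab).le (sq_nonneg p.2)]

lemma invOn_psiInvMap (ha : 0 ≤ a) (hab : a < b) (hc : 0 ≤ c) :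
    InvOn (psiInvMap a b c) (psiMap a b c) (LamSet a b c) Bplus :=
  ⟨fun _ => psiInvMap_psiMap hab, fun _ => psiMap_psiInvMap ha hab hc⟩

lemma bijOn_psiMap (ha : 0 ≤ a) (hab : a < b) (hc : 0 ≤ c) :
    BijOn (psiMap a b c) (LamSet a b c) Bplus :=
  (invOn_psiInvMap ha hab hc).bijOn (mapsTo_psiMap hab) (mapsTo_psiInvMap ha hab hc)

lemma mapsTo_psiMap_openLamSet (hab : a < b) :
    MapsTo (psiMap a b c) (openLamSet a b c) (openLamSet 0 1 0) := by
  rintro ⟨u, v⟩ ⟨h₁, h₂, -⟩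
  have hT : 0 < (-a + (a - c) * u ^ 2 + v ^ 2) / (b - a) :=
    div_pos (by linarith) (sub_pos.2 hab)
  have hT' : (-a + (a - c) * u ^ 2 + v ^ 2) / (b - a) < 1 - u ^ 2 := by
    rw [div_lt_iff₀ (sub_pos.2 hab)]; linarith
  refine ⟨?_, ?_, Real.sqrt_pos.2 hT⟩ <;>
  · dsimp only [psiMap, frakt]
    rw [Real.sq_sqrt hT.le]
    linarith

lemma mapsTo_psiInvMap_openLamSet (ha : 0 ≤ a) (hab : a < b) (hc : 0 ≤ c) :
    MapsTo (psiInvMap a b c) (openLamSet 0 1 0) (openLamSet a b c) := by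
  intro p hp
  have hQ := psiInvSq_pos ha hab hc hp
  have hsq := sq_psiInvMap_snd hQ.le
  obtain ⟨-, h₂, h₃⟩ := hp
  refine ⟨?_, ?_, Real.sqrt_pos.2 hQ⟩ <;>
  · rw [hsq]
    dsimp only [psiInvMap, psiInvSq]
    nlinarith [mul_pos (sub_pos.2 hab) (pow_pos h₃ 2)]

lemma bijOn_psiInvMap_openLamSet (ha : 0 ≤ a) (hab : a < b) (hc : 0 ≤ c) :
    BijOn (psiInvMap a b c) (openLamSet 0 1 0) (openLamSet a b c) := by
  refine InvOn.bijOn ((invOn_psiInvMap ha hab hc).symm.mono ?_ (openLamSet_subset_lamSet hab))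
    (mapsTo_psiInvMap_openLamSet ha hab hc) (mapsTo_psiMap_openLamSet hab)
  exact bplus_eq_lamSet ▸ openLamSet_subset_lamSet zero_lt_one

lemma hasFDerivAt_psiInvMap (hQ : 0 < psiInvSq a b c p) :
    HasFDerivAt (psiInvMap a b c) (psiInvFDeriv a b c p) p := by
  have hsq : ∀ i : ℝ × ℝ →L[ℝ] ℝ, HasFDerivAt (fun q : ℝ × ℝ => i q ^ 2) ((2 * i p) • i) p :=
    fun i => by simpa using i.hasFDerivAt.pow 2
  have hQ' : HasFDerivAt (psiInvSq a b c)
      ((2 * (c - a) * p.1) • ContinuousLinearMap.fst ℝ ℝ ℝ +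
        (2 * (b - a) * p.2) • ContinuousLinearMap.snd ℝ ℝ ℝ) p := by
    have := (((hsq (.snd ℝ ℝ ℝ)).const_mul (b - a)).add
      (((hsq (.fst ℝ ℝ ℝ)).const_sub 1).const_mul a)).add ((hsq (.fst ℝ ℝ ℝ)).const_mul c)
    refine this.congr_fderiv (ContinuousLinearMap.ext fun x => ?_)
    simp only [add_apply, smul_apply, neg_apply, ContinuousLinearMap.coe_fst',
      ContinuousLinearMap.coe_snd', smul_eq_mul]
    ring
  refine (hasFDerivAt_fst.prodMk (hQ'.sqrt hQ.ne')).congr_fderiv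
    (ContinuousLinearMap.ext fun x => Prod.ext rfl ?_)
  have hr : √(psiInvSq a b c p) ≠ 0 := (Real.sqrt_pos.2 hQ).ne'
  simp only [psiInvFDeriv, ContinuousLinearMap.prod_apply, add_apply, smul_apply,
    ContinuousLinearMap.coe_fst', ContinuousLinearMap.coe_snd', smul_eq_mul]
  field_simp

lemma abs_det_mul_Wabc_psiInvMap (ha : 0 ≤ a) (hab : a < b) (hc : 0 ≤ c) (κ1 κ2 κ3 : ℝ)
    (hp : p ∈ openLamSet 0 1 0) :
    |(psiInvFDeriv a b c p).det| * Wabc a b c κ1 κ2 κ3 (psiInvMap a b c p) =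
      (b - a) * WBdisk κ1 κ2 κ3 p := by
  have hQ := psiInvSq_pos ha hab hc hp
  have hr : 0 < √(psiInvSq a b c p) := Real.sqrt_pos.2 hQ
  have ht : 0 < p.2 := hp.2.2
  have hdet : (psiInvFDeriv a b c p).det = (b - a) * p.2 / √(psiInvSq a b c p) :=
    det_fst_prod_smul_fst_add_smul_snd _ _
  have hlow := lowerRatio_psiInvSq (c := c) (p := p) hab
  have hup := upperRatio_psiInvSq (c := c) (p := p) hab
  rw [← sq_psiInvMap_snd hQ.le] at hlow hup
  rw [hdet, abs_of_pos (div_pos (mul_pos (sub_pos.2 hab) ht) hr), Wabc, WBdisk]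
  rw [psiInvMap_eq] at hlow hup ⊢
  dsimp only at hlow hup ⊢
  rw [hlow, hup, abs_of_pos hr, abs_of_pos ht, ← self_mul_sq_rpow_sub_half ht]
  field_simp

theorem setIntegral_lamSet_mul_Wabc (ha : 0 ≤ a) (hab : a < b) (hc : 0 ≤ c) (κ1 κ2 κ3 : ℝ)
    (f : ℝ × ℝ → ℝ) :
    ∫ p in LamSet a b c, f p * Wabc a b c κ1 κ2 κ3 p =
      (b - a) * ∫ p in Bplus, f (psiInvMap a b c p) * WBdisk κ1 κ2 κ3 p := by
  have hopen := isOpen_openLamSet 0 1 0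
  have hbij := bijOn_psiInvMap_openLamSet ha hab hc
  calc ∫ p in LamSet a b c, f p * Wabc a b c κ1 κ2 κ3 p
      = ∫ p in psiInvMap a b c '' openLamSet 0 1 0, f p * Wabc a b c κ1 κ2 κ3 p := by
        rw [hbij.image_eq, setIntegral_congr_set (lamSet_ae_eq_openLamSet hab)]
    _ = ∫ p in openLamSet 0 1 0, |(psiInvFDeriv a b c p).det| •
          (f (psiInvMap a b c p) * Wabc a b c κ1 κ2 κ3 (psiInvMap a b c p)) :=
        integral_image_eq_integral_abs_det_fderiv_smul volume hopen.measurableSet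
          (fun p hp => (hasFDerivAt_psiInvMap (psiInvSq_pos ha hab hc hp)).hasFDerivWithinAt)
          hbij.injOn _
    _ = ∫ p in openLamSet 0 1 0, (b - a) * (f (psiInvMap a b c p) * WBdisk κ1 κ2 κ3 p) := by
        refine setIntegral_congr_fun hopen.measurableSet fun p hp => ?_
        rw [smul_eq_mul, mul_left_comm, abs_det_mul_Wabc_psiInvMap ha hab hc κ1 κ2 κ3 hp]
        ring
    _ = (b - a) * ∫ p in Bplus, f (psiInvMap a b c p) * WBdisk κ1 κ2 κ3 p := by
        rw [integral_const_mul, bplus_eq_lamSet,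
          setIntegral_congr_set (lamSet_ae_eq_openLamSet zero_lt_one)]

end

theorem psi_bijOn_and_integral_identity
    (a b c κ1 κ2 κ3 : ℝ) (ha : 0 ≤ a) (hab : a < b) (hc : 0 ≤ c) :
    Set.BijOn (psiMap a b c) (LamSet a b c) Bplus ∧
    (∀ p ∈ LamSet a b c, psiInvMap a b c (psiMap a b c p) = p) ∧
    (∀ p ∈ Bplus, psiMap a b c (psiInvMap a b c p) = p) ∧
    ∀ f : ℝ × ℝ → ℝ, Measurable f →
      IntegrableOn (fun p => f p * Wabc a b c κ1 κ2 κ3 p) (LamSet a b c) →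
      ∫ p in LamSet a b c, f p * Wabc a b c κ1 κ2 κ3 p
        = (b - a) * ∫ p in Bplus, f (psiInvMap a b c p) * WBdisk κ1 κ2 κ3 p :=
  ⟨bijOn_psiMap ha hab hc, fun _ => psiInvMap_psiMap hab, fun _ => psiMap_psiInvMap ha hab hc,
    fun f _ _ => setIntegral_lamSet_mul_Wabc ha hab hc κ1 κ2 κ3 f⟩
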